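/- For every polynomial P ∈ ℚ[x_0,…,x_N] and all x,a ∈ ℝ, the derivative with respect to a of the evaluated expression satisfies d/da [P(K(x,a))] = (D_{K2}P)(K(x,a)). -/

import Mathlib

/-!
Since `∑ₘ Kₘ(x,a) zᵐ = (1 - z)ˣ (1 + z)^(a - x)`, Chu–Vandermonde gives the shift formula
`Kₘ(x, a + s) = ∑_{i + n = m} Kᵢ(x,a) C(s,n)`. Differentiating in `s` at `0`, where
`C(s,n)' = (-1)^(n+1)/n` for `n ≥ 1`, shows that `∂ₐ Kₘ = ∑_{l<m} (-1)^(m+1+l)/(m-l) Kₗ`, which is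
exactly `D_{K2}(xₘ)` evaluated at `K(x,a)`. Both sides of the theorem are then derivations along the
evaluation at `K(x,a)` that agree on the generators.
-/

/-- Generalized binomial coefficient `C(t, k) = t(t-1)⋯(t-k+1)/k!` of a real number. -/
noncomputable def genBinom (t : ℝ) (k : ℕ) : ℝ :=
  (∏ j ∈ Finset.range k, (t - j)) / (Nat.factorial k)

/-- The binary Kravchuk polynomial `K_n(x,a) = ∑_{i=0}^n (-1)^i C(x,i) C(a-x, n-i)`. -/
noncomputable def K (n : ℕ) (x a : ℝ) : ℝ :=
  ∑ i ∈ Finset.range (n + 1), (-1 : ℝ) ^ i * genBinom x i * genBinom (a - x) (n - i)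

/-- The variable `x_i` of `ℚ[x_0,…,x_N]` (for `i ≤ N`). -/
noncomputable def Xv (N : ℕ) (i : ℕ) : MvPolynomial (Fin (N + 1)) ℚ :=
  if h : i ≤ N then MvPolynomial.X ⟨i, Nat.lt_succ_of_le h⟩ else 0

/-- The second Kravchuk derivation: `D_{K2}(x_0)=0`,
`D_{K2}(x_m)=∑_{i=0}^{m-1} ((-1)^{m+1+i}/(m-i)) x_i`. -/
noncomputable def DK2 (N : ℕ) :
    Derivation ℚ (MvPolynomial (Fin (N + 1)) ℚ) (MvPolynomial (Fin (N + 1)) ℚ) :=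
  MvPolynomial.mkDerivation ℚ fun m : Fin (N + 1) =>
    ∑ i ∈ Finset.range (m : ℕ),
      MvPolynomial.C ((-1 : ℚ) ^ ((m : ℕ) + 1 + i) / (((m : ℕ) : ℚ) - (i : ℚ))) * Xv N i

open Finset PowerSeries

lemma genBinom_eq_ringChoose (t : ℝ) (k : ℕ) : genBinom t k = Ring.choose t k := by
  rw [Ring.choose_eq_smul, ← Polynomial.aeval_eq_smeval, ← Polynomial.eval_map_algebraMap,
    descPochhammer_map, descPochhammer_eval_eq_prod_range, genBinom, smul_eq_mul, div_eq_inv_mul]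

/-- `(1 - X)ˣ (1 + X)^(a - x)`. -/
noncomputable def kravchukSeries (x a : ℝ) : PowerSeries ℝ :=
  rescale (-1) (PowerSeries.binomialSeries ℝ x) * PowerSeries.binomialSeries ℝ (a - x)

lemma coeff_kravchukSeries (m : ℕ) (x a : ℝ) : coeff m (kravchukSeries x a) = K m x a := by
  simp only [kravchukSeries, coeff_mul, coeff_rescale, binomialSeries_coeff, smul_eq_mul, mul_one,
    K, genBinom_eq_ringChoose, Nat.sum_antidiagonal_eq_sum_range_succ_mk, mul_assoc]

lemma kravchukSeries_add (x a s : ℝ) :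
    kravchukSeries x (a + s) = kravchukSeries x a * PowerSeries.binomialSeries ℝ s := by
  rw [kravchukSeries, kravchukSeries, add_sub_right_comm, binomialSeries_add, mul_assoc]

lemma K_add (m : ℕ) (x a s : ℝ) :
    K m x (a + s) = ∑ p ∈ antidiagonal m, K p.1 x a * genBinom s p.2 := by
  simp only [← coeff_kravchukSeries, kravchukSeries_add, coeff_mul, binomialSeries_coeff,
    smul_eq_mul, mul_one, genBinom_eq_ringChoose]

lemma genBinom_succ_eq_mul_genBinom_sub_one (s : ℝ) (n : ℕ) :
    genBinom s (n + 1) = s * genBinom (s - 1) n / (n + 1) := by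
  simp only [genBinom, prod_range_succ', Nat.factorial_succ, sub_sub, Nat.cast_succ, Nat.cast_zero,
    sub_zero, Nat.cast_mul, add_comm (1 : ℝ)]
  field_simp

lemma genBinom_neg_one (n : ℕ) : genBinom (-1) n = (-1) ^ n := by
  have hprod : ∏ j ∈ range n, (-1 - j : ℝ) = (-1) ^ n * n.factorial := by
    induction n with
    | zero => simp
    | succ n ih => rw [prod_range_succ, ih, Nat.factorial_succ]; push_cast; ring
  rw [genBinom, hprod, mul_div_cancel_right₀ _ (by positivity)]

lemma differentiable_genBinom (n : ℕ) : Differentiable ℝ (fun s => genBinom s n) := by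
  unfold genBinom
  fun_prop

/-- For `n = 0` the junk value `(-1) / 0 = 0` is the derivative of the constant `1`. -/
lemma hasDerivAt_genBinom_zero (n : ℕ) :
    HasDerivAt (fun s => genBinom s n) ((-1) ^ (n + 1) / n) 0 := by
  cases n with
  | zero => simpa [genBinom] using hasDerivAt_const (0 : ℝ) (1 : ℝ)
  | succ n =>
    have h : HasDerivAt (fun s => s * genBinom (s - 1) n / (n + 1)) ((-1) ^ n / (n + 1)) 0 := by
      simpa [genBinom_neg_one] using ((hasDerivAt_id 0).fun_mul (HasDerivAt.comp_sub_const
        (0 : ℝ) 1 (differentiable_genBinom n _).hasDerivAt)).div_const ((n : ℝ) + 1)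
    simp only [genBinom_succ_eq_mul_genBinom_sub_one]
    convert h using 1
    push_cast
    ring

lemma hasDerivAt_K (m : ℕ) (x a : ℝ) :
    HasDerivAt (fun t => K m x t)
      (∑ l ∈ range m, (-1) ^ (m + 1 + l) / ((m : ℝ) - l) * K l x a) a := by
  have hshift : HasDerivAt (fun s => K m x (a + s))
      (∑ p ∈ antidiagonal m, K p.1 x a * ((-1) ^ (p.2 + 1) / p.2)) 0 := by
    simp only [K_add]
    exact HasDerivAt.fun_sum fun p _ => (hasDerivAt_genBinom_zero p.2).const_mul _
  have hcoeff : ∑ p ∈ antidiagonal m, K p.1 x a * ((-1) ^ (p.2 + 1) / p.2)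
      = ∑ l ∈ range m, (-1) ^ (m + 1 + l) / ((m : ℝ) - l) * K l x a := by
    rw [Nat.sum_antidiagonal_eq_sum_range_succ_mk, sum_range_succ, Nat.sub_self, Nat.cast_zero,
      div_zero, mul_zero, add_zero]
    refine sum_congr rfl fun l hl => ?_
    have hlm : l ≤ m := (mem_range.mp hl).le
    rw [Nat.cast_sub hlm, mul_comm, show m + 1 + l = m - l + 1 + 2 * l by omega,
      pow_add (-1 : ℝ) _ (2 * l), pow_mul]
    norm_num
  rw [← sub_self a] at hshift
  simpa only [add_sub_cancel, hcoeff] using hshift.comp_sub_const a a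

open MvPolynomial in
theorem MvPolynomial.hasDerivAt_aeval_of_derivation {𝕜 R σ : Type*} [NontriviallyNormedField 𝕜]
    [CommSemiring R] [Algebra R 𝕜] (D : Derivation R (MvPolynomial σ R) (MvPolynomial σ R))
    (f : 𝕜 → σ → 𝕜) (a : 𝕜) (hf : ∀ i, HasDerivAt (fun t => f t i) (aeval (f a) (D (X i))) a)
    (P : MvPolynomial σ R) :
    HasDerivAt (fun t => aeval (f t) P) (aeval (f a) (D P)) a := by
  induction P using MvPolynomial.induction_on with
  | C r =>
    simpa [← algebraMap_eq] using hasDerivAt_const a (algebraMap R 𝕜 r)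
  | add p q hp hq => simpa using hp.fun_add hq
  | mul_X p i hp =>
    simpa [Derivation.leibniz, add_comm, mul_comm] using hp.fun_mul (hf i)

open MvPolynomial in
lemma aeval_DK2_X (N : ℕ) (g : ℕ → ℝ) (i : Fin (N + 1)) :
    aeval (fun j : Fin (N + 1) => g j) (DK2 N (X i))
      = ∑ l ∈ range i, (-1) ^ ((i : ℕ) + 1 + l) / ((i : ℝ) - l) * g l := by
  rw [DK2, mkDerivation_X, map_sum]
  refine sum_congr rfl fun l hl => ?_
  have hlN : l ≤ N := (mem_range.mp hl).le.trans (Nat.lt_succ_iff.mp i.isLt)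
  rw [Xv, dif_pos hlN]
  simp

/-- `d/da [P(K(x,a))] = (D_{K2}P)(K(x,a))`. -/
theorem deriv_aeval_kravchuk_a (N : ℕ) (P : MvPolynomial (Fin (N + 1)) ℚ) (x a : ℝ) :
    deriv (fun t : ℝ => MvPolynomial.aeval (fun i : Fin (N + 1) => K (i : ℕ) x t) P) a
      = MvPolynomial.aeval (fun i : Fin (N + 1) => K (i : ℕ) x a) (DK2 N P) := by
  refine (MvPolynomial.hasDerivAt_aeval_of_derivation (DK2 N) (fun t i => K i x t) a
    (fun i => ?_) P).deriv
  rw [aeval_DK2_X N (fun l => K l x a)]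
  exact hasDerivAt_K i x a
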